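/- Let K be a field of characteristic 2, A = K[x^{±1}, y^{±1}], U the 2×2 matrix over A with rows (0, 1) and (y, 0), and Q the 4×4 matrix over A with rows (0, 1, 1, x⁻¹y⁻¹), (y, 0, x⁻¹, 1), (x, y⁻¹, 0, 1), (1, x, y, 0). Suppose f ∈ M₄(A) satisfies Qf + fQ = 0, and write f in 2×2 blocks as f = [[A, B], [C, D]]. Then there exist S, T ∈ M₂(A) such that D = A + (UT + TU) and C = x·B + (US + SU). -/

import Mathlib

/-!
Write `d_P X = P X + X P`. For `M = A + D` and `N = C + x B`, adding the diagonal blocks of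
`d_Q f = 0`, and the `(2,1)` block to `x` times the `(1,2)` block, gives `d_U M = d_V N` and
`d_U N = x d_V M` (characteristic 2). Since `V = 1 + w U` with `w = x⁻¹y⁻¹`, we have
`d_V = w d_U`, so `(1 - x w²) d_U M = 0`; as `x w² = x⁻¹y⁻² ≠ 1` in the domain `A`, both
`d_U M` and `d_U N` vanish. Finally, in characteristic 2 the kernel of `d_U` on `M₂(A)` is its
image: both are the matrices `a + b U`.
-/

noncomputable section

/-- The Laurent polynomial ring `K[x^{±1}, y^{±1}]`. -/
abbrev LaurentTwo (K : Type*) [Field K] := AddMonoidAlgebra K (ℤ × ℤ)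

/-- The monomial `x^i y^j` in `K[x^{±1}, y^{±1}]`. -/
def mon (K : Type*) [Field K] (i j : ℤ) : LaurentTwo K := AddMonoidAlgebra.single (i, j) 1

/-- The matrix `U = [[0, 1], [y, 0]]`. -/
def Umat (K : Type*) [Field K] : Matrix (Fin 2) (Fin 2) (LaurentTwo K) :=
  !![0, 1; mon K 0 1, 0]

/-- The matrix `V = Id₂ + x⁻¹y⁻¹·U = [[1, x⁻¹y⁻¹], [x⁻¹, 1]]`. -/
def Vmat (K : Type*) [Field K] : Matrix (Fin 2) (Fin 2) (LaurentTwo K) :=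
  !![1, mon K (-1) (-1); mon K (-1) 0, 1]

/-- The mirror matrix `Q` of `ℝP²`, written in `2×2` blocks as `Q = [[U, V], [xV, U]]`. -/
def Qblk (K : Type*) [Field K] :
    Matrix (Fin 2 ⊕ Fin 2) (Fin 2 ⊕ Fin 2) (LaurentTwo K) :=
  Matrix.fromBlocks (Umat K) (Vmat K) (mon K 1 0 • Vmat K) (Umat K)

instance {K G : Type*} [Field K] [AddMonoid G] (p : ℕ) [CharP K p] :
    CharP (AddMonoidAlgebra K G) p :=
  charP_of_injective_algebraMap' K p

lemma mon_mul (K : Type*) [Field K] (i j k l : ℤ) :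
    mon K i j * mon K k l = mon K (i + k) (j + l) := by
  simp [mon, AddMonoidAlgebra.single_mul_single]

lemma mon_zero_zero (K : Type*) [Field K] : mon K 0 0 = 1 := rfl

lemma mon_inj (K : Type*) [Field K] {i j k l : ℤ} :
    mon K i j = mon K k l ↔ i = k ∧ j = l :=
  (AddMonoidAlgebra.single_left_inj one_ne_zero).trans Prod.ext_iff

lemma Vmat_eq_one_add_smul_Umat (K : Type*) [Field K] :
    Vmat K = 1 + mon K (-1) (-1) • Umat K := by
  ext i j
  fin_cases i <;> fin_cases j <;> simp [Vmat, Umat, mon_mul]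

lemma mon_mul_mon_mul_mon_ne_one (K : Type*) [Field K] :
    mon K 1 0 * mon K (-1) (-1) * mon K (-1) (-1) ≠ 1 := by
  rw [mon_mul, mon_mul, ← mon_zero_zero, Ne, mon_inj]
  omega

section anticomm

variable {R n : Type*} [CommRing R] [Fintype n]

/-- The map `d_P`; in characteristic 2 it is also the commutator `X ↦ P X - X P`. -/
def anticomm (P X : Matrix n n R) : Matrix n n R := P * X + X * P

lemma anticomm_one_add_smul [DecidableEq n] [CharP R 2] (U X : Matrix n n R) (w : R) :
    anticomm (1 + w • U) X = w • anticomm U X := by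
  have hX : X + X = 0 := by rw [← two_smul R X, CharTwo.two_eq_zero, zero_smul]
  calc anticomm (1 + w • U) X = (X + X) + w • anticomm U X := by
        simp only [anticomm, add_mul, mul_add, one_mul, mul_one, Matrix.smul_mul,
          Matrix.mul_smul, smul_add]
        abel
    _ = w • anticomm U X := by rw [hX, zero_add]

open Matrix in
lemma anticomm_fromBlocks_eq_zero (U V A B C D : Matrix n n R) (c : R)
    (h : anticomm (fromBlocks U V (c • V) U) (fromBlocks A B C D) = 0) :
    anticomm U (A + D) + anticomm V (c • B + C) = 0 ∧
      anticomm U (c • B + C) + c • anticomm V (A + D) = 0 := by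
  rw [anticomm, fromBlocks_multiply, fromBlocks_multiply, fromBlocks_add, ← fromBlocks_zero,
    fromBlocks_inj] at h
  obtain ⟨h₁₁, h₁₂, h₂₁, h₂₂⟩ := h
  constructor
  · calc _ = (U * A + V * C + (A * U + B * (c • V)))
            + (c • V * B + U * D + (C * V + D * U)) := by
          simp only [anticomm, add_mul, mul_add, Matrix.smul_mul, Matrix.mul_smul]
          abel
      _ = 0 := by rw [h₁₁, h₂₂, add_zero]
  · calc _ = (c • V * A + U * C + (C * U + D * (c • V)))
            + c • (U * B + V * D + (A * V + B * U)) := by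
          simp only [anticomm, add_mul, mul_add, Matrix.smul_mul, Matrix.mul_smul, smul_add]
          abel
      _ = 0 := by rw [h₂₁, h₁₂, smul_zero, add_zero]

open Matrix in
lemma anticomm_eq_zero_of_anticomm_fromBlocks_eq_zero [DecidableEq n] [IsDomain R] [CharP R 2]
    {U A B C D : Matrix n n R} {c w : R} (hcw : c * w * w ≠ 1)
    (h : anticomm (fromBlocks U (1 + w • U) (c • (1 + w • U)) U) (fromBlocks A B C D) = 0) :
    anticomm U (A + D) = 0 ∧ anticomm U (c • B + C) = 0 := by
  obtain ⟨h₁, h₂⟩ := anticomm_fromBlocks_eq_zero U _ A B C D c h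
  simp only [anticomm_one_add_smul, smul_smul] at h₁ h₂
  have hsmul : (1 - c * w * w) • anticomm U (A + D) = 0 := by
    linear_combination (norm := module) h₁ - w • h₂
  have hM : anticomm U (A + D) = 0 :=
    (smul_eq_zero.mp hsmul).resolve_left (sub_ne_zero.mpr hcw.symm)
  refine ⟨hM, ?_⟩
  rwa [hM, smul_zero, add_zero] at h₂

lemma exists_anticomm_eq_of_anticomm_eq_zero [CharP R 2] (y : R) {N : Matrix (Fin 2) (Fin 2) R}
    (h : anticomm !![0, 1; y, 0] N = 0) : ∃ T, anticomm !![0, 1; y, 0] T = N := by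
  have h₁₀ : N 1 0 = N 0 1 * y := by
    simpa [anticomm, Matrix.mul_apply, Matrix.vecMul, dotProduct, CharTwo.add_eq_zero]
      using congrFun₂ h 0 0
  have h₁₁ : N 1 1 = N 0 0 := by
    simpa [anticomm, Matrix.mul_apply, Matrix.vecMul, dotProduct, CharTwo.add_eq_zero]
      using congrFun₂ h 0 1
  refine ⟨!![0, 0; N 0 0, N 0 1], ?_⟩
  ext i j
  fin_cases i <;> fin_cases j <;> simp [anticomm, h₁₀, h₁₁]

end anticomm

/-- If `f ∈ M₄(A)`, written in `2×2` blocks as `f = [[A, B], [C, D]]`,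
satisfies `Qf + fQ = 0`, then there are `S, T ∈ M₂(A)` with `D = A + (UT + TU)` and
`C = x·B + (US + SU)`. -/
theorem closed_block_structure (K : Type*) [Field K] [CharP K 2]
    (f : Matrix (Fin 2 ⊕ Fin 2) (Fin 2 ⊕ Fin 2) (LaurentTwo K))
    (hf : Qblk K * f + f * Qblk K = 0) :
    ∃ S T : Matrix (Fin 2) (Fin 2) (LaurentTwo K),
      f.toBlocks₂₂ = f.toBlocks₁₁ + (Umat K * T + T * Umat K) ∧
      f.toBlocks₂₁ = mon K 1 0 • f.toBlocks₁₂ + (Umat K * S + S * Umat K) := by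
  change anticomm (Qblk K) f = 0 at hf
  rw [← f.fromBlocks_toBlocks, Qblk, Vmat_eq_one_add_smul_Umat] at hf
  obtain ⟨hM, hN⟩ :=
    anticomm_eq_zero_of_anticomm_fromBlocks_eq_zero (mon_mul_mon_mul_mon_ne_one K) hf
  obtain ⟨T, hT⟩ := exists_anticomm_eq_of_anticomm_eq_zero (mon K 0 1) hM
  obtain ⟨S, hS⟩ := exists_anticomm_eq_of_anticomm_eq_zero (mon K 0 1) hN
  refine ⟨S, T, ?_, ?_⟩
  · change _ = _ + anticomm (Umat K) T
    rw [Umat, hT, ← add_assoc, CharTwo.add_self_eq_zero, zero_add]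
  · change _ = _ + anticomm (Umat K) S
    rw [Umat, hS, ← add_assoc, CharTwo.add_self_eq_zero, zero_add]

end
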